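/- arXiv:1308.5437 — 2 statements merged into one kernel-verified Lean document; each statement's English description precedes it below -/
import Mathlib

section
/- For every integer k ≥ 3 and all integers p ≥ 1, q ≥ 0 with 1 + p + q = k, if p·2^(p-1)·3^q = 4·3^(k-3), then p = 2 or p = 3. In other words, the maximum of p·2^(p-1)·3^q over such pairs is attained only for p ∈ {2, 3}. -/
/-! For `p ≥ 2` and `k = 1 + p + q` the factor `3 ^ q` cancels and the equation becomes
`p * 2 ^ (p - 1) = 4 * 3 ^ (p - 2)`, which holds for `p = 2, 3` but fails for `p ≥ 4`, where
the left side grows by the factor `2 (p + 1) / p ≤ 3` at each step and so falls behind.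
For `p = 1` the two sides have different parity. -/

theorem add_four_mul_two_pow_lt_four_mul_three_pow (n : ℕ) :
    (n + 4) * 2 ^ (n + 3) < 4 * 3 ^ (n + 2) := by
  induction n with
  | zero => norm_num
  | succ n ih =>
    calc (n + 1 + 4) * 2 ^ (n + 1 + 3) = 2 * (n + 5) * 2 ^ (n + 3) := by ring
      _ ≤ 3 * (n + 4) * 2 ^ (n + 3) := Nat.mul_le_mul_right _ (by omega)
      _ < 3 * (4 * 3 ^ (n + 2)) := by rw [mul_assoc]; gcongr
      _ = 4 * 3 ^ (n + 1 + 2) := by ring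

theorem max_attained_only_at_p_two_or_three_general (k : ℕ) (p q : ℕ)
    (hpq : 1 + p + q = k)
    (h : p * 2 ^ (p - 1) * 3 ^ q = 4 * 3 ^ (k - 3)) :
    p = 2 ∨ p = 3 := by
  subst hpq
  match p, h with
  | 0, h => simp at h
  | 1, h =>
    have h_odd : Odd (1 * 2 ^ 0 * 3 ^ q) := by simpa using Odd.pow (by decide : Odd 3)
    have h_even : Even (4 * 3 ^ (1 + 1 + q - 3)) := (by decide : Even 4).mul_right _
    exact absurd (h ▸ h_odd) (Nat.not_odd_iff_even.2 h_even)
  | 2, _ => exact .inl rfl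
  | 3, _ => exact .inr rfl
  | n + 4, h =>
    have h_exp : 1 + (n + 4) + q - 3 = (n + 2) + q := by omega
    rw [show n + 4 - 1 = n + 3 from rfl, h_exp, pow_add 3, ← mul_assoc] at h
    have h_lt := Nat.mul_lt_mul_of_pos_right (add_four_mul_two_pow_lt_four_mul_three_pow n)
      (pow_pos three_pos q)
    exact absurd h h_lt.ne

/-- For every integer `k ≥ 3` and `p ≥ 1`, `q ≥ 0` with `1 + p + q = k`, if
`p * 2^(p-1) * 3^q = 4 * 3^(k-3)`, then `p = 2` or `p = 3`. -/
theorem max_attained_only_at_p_two_or_three (k : ℕ) (hk : 3 ≤ k) (p q : ℕ)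
    (hp : 1 ≤ p) (hpq : 1 + p + q = k)
    (h : p * 2 ^ (p - 1) * 3 ^ q = 4 * 3 ^ (k - 3)) :
    p = 2 ∨ p = 3 :=
  max_attained_only_at_p_two_or_three_general k p q hpq h
end

section
/- Let T be a finite tree, let f be a locating k-coloring of T, let x be a vertex of T, and let p be the number of distinct colors appearing on the neighbors of x. Then for every color i appearing on a neighbor of x, the number of neighbors of x receiving color i is at most 2^(p-1)·3^(k-1-p). -/
/-- A proper `k`-coloring of `G`: a function onto the `k` colors such that
adjacent vertices receive different colors. -/
def IsProperColoring {V : Type*} (G : SimpleGraph V) (k : ℕ) (f : V → Fin k) : Prop :=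
  Function.Surjective f ∧ ∀ u v : V, G.Adj u v → f u ≠ f v

/-- The color code of a vertex `v`: its `i`-th coordinate is the distance from `v`
to the color class `f⁻¹(i)`. -/
noncomputable def colorCode {V : Type*} (G : SimpleGraph V) {k : ℕ} (f : V → Fin k)
    (v : V) : Fin k → ℕ :=
  fun i => sInf {n : ℕ | ∃ u : V, f u = i ∧ G.dist v u = n}

/-- A locating `k`-coloring: a proper `k`-coloring in which distinct vertices have
distinct color codes. -/
def IsLocatingColoring {V : Type*} (G : SimpleGraph V) (k : ℕ) (f : V → Fin k) : Prop :=
  IsProperColoring G k f ∧ Function.Injective (colorCode G f)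

/-- The locating chromatic number: the least `k` admitting a locating `k`-coloring. -/
noncomputable def locatingChromaticNumber {V : Type*} (G : SimpleGraph V) : ℕ :=
  sInf {k : ℕ | ∃ f : V → Fin k, IsLocatingColoring G k f}

/-!
All neighbors `y` of `x` of color `i` have pairwise distinct color codes, and each code is
confined to a small box: `d(y, V_i) = 0`, `d(y, V_{f x}) = 1`, `d(y, V_j) ∈ {1, 2}` for each of
the `p - 1` other colors `j` seen around `x`, and for each of the remaining `k - 1 - p` colors
`d(y, V_j)` differs from `d(x, V_j)` by at most one. The box has at most
`2^(p-1) * 3^(k-1-p)` points.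
-/

open Finset

section ColorCode

variable {V : Type*} {G : SimpleGraph V} {k : ℕ} {f : V → Fin k}

lemma colorCode_le_dist (v : V) {u : V} {j : Fin k} (h : f u = j) :
    colorCode G f v j ≤ G.dist v u :=
  Nat.sInf_le ⟨u, h, rfl⟩

lemma exists_dist_eq_colorCode (hs : Function.Surjective f) (v : V) (j : Fin k) :
    ∃ u, f u = j ∧ G.dist v u = colorCode G f v j := by
  obtain ⟨u, hu⟩ := hs j
  exact Nat.sInf_mem (s := {n | ∃ u, f u = j ∧ G.dist v u = n}) ⟨G.dist v u, u, hu, rfl⟩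

lemma colorCode_self (v : V) : colorCode G f v (f v) = 0 :=
  Nat.le_zero.mp <| (colorCode_le_dist v rfl).trans_eq SimpleGraph.dist_self

lemma colorCode_pos (hs : Function.Surjective f) (hc : G.Connected) {v : V} {j : Fin k}
    (h : f v ≠ j) : 0 < colorCode G f v j := by
  obtain ⟨u, rfl, hd⟩ := exists_dist_eq_colorCode (G := G) hs v j
  refine Nat.pos_of_ne_zero fun h0 => h ?_
  rw [← hd, hc.dist_eq_zero_iff] at h0
  exact congrArg f h0

lemma colorCode_le_add_one_of_adj (hs : Function.Surjective f) (hc : G.Connected) {x y : V}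
    (hxy : G.Adj x y) (j : Fin k) : colorCode G f y j ≤ colorCode G f x j + 1 := by
  obtain ⟨u, hu, hd⟩ := exists_dist_eq_colorCode (G := G) hs x j
  calc colorCode G f y j ≤ G.dist y u := colorCode_le_dist y hu
    _ ≤ G.dist y x + G.dist x u := hc.dist_triangle
    _ = colorCode G f x j + 1 := by
      rw [SimpleGraph.dist_eq_one_iff_adj.mpr hxy.symm, hd, add_comm]

lemma colorCode_le_two_of_adj_of_adj {x y z : V} (hxy : G.Adj x y) (hxz : G.Adj x z) :
    colorCode G f y (f z) ≤ 2 :=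
  (colorCode_le_dist y rfl).trans (SimpleGraph.dist_le (.cons hxy.symm hxz.toWalk))

end ColorCode

/-- The admissible values of `d(y, V_j)` for a neighbor `y` of color `i` of a vertex `x` of
color `a` whose code is `c`, where `S` is the set of colors on the neighbors of `x`. -/
def neighborCodeRange {ι : Type*} [DecidableEq ι] (c : ι → ℕ) (a i : ι) (S : Finset ι)
    (j : ι) : Finset ℕ :=
  if j = i then {0} else if j = a then {1} else if j ∈ S then Icc 1 2
  else Icc (c j - 1) (c j + 1)

lemma colorCode_mem_neighborCodeRange {V : Type*} [Fintype V] {G : SimpleGraph V}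
    [DecidableRel G.Adj] {k : ℕ} {f : V → Fin k} (hs : Function.Surjective f)
    (hc : G.Connected) {x y : V} (hxy : G.Adj x y) (j : Fin k) :
    colorCode G f y j ∈
      neighborCodeRange (colorCode G f x) (f x) (f y) ((G.neighborFinset x).image f) j := by
  have hpos {j : Fin k} (hj : j ≠ f y) : 0 < colorCode G f y j :=
    colorCode_pos hs hc (Ne.symm hj)
  unfold neighborCodeRange
  split_ifs with hji hjx hjS
  · subst hji
    exact mem_singleton.mpr (colorCode_self y)
  · subst hjx
    have := (colorCode_le_dist (G := G) (f := f) y rfl).trans_eq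
      (SimpleGraph.dist_eq_one_iff_adj.mpr hxy.symm)
    exact mem_singleton.mpr (by have := hpos hji; omega)
  · obtain ⟨z, hz, rfl⟩ := mem_image.mp hjS
    have := colorCode_le_two_of_adj_of_adj (f := f) hxy ((G.mem_neighborFinset x z).mp hz)
    exact mem_Icc.mpr ⟨hpos hji, this⟩
  · have := colorCode_le_add_one_of_adj hs hc hxy j
    have := colorCode_le_add_one_of_adj hs hc hxy.symm j
    exact mem_Icc.mpr ⟨by omega, by omega⟩

lemma prod_le_two_pow_mul_three_pow {ι : Type*} [Fintype ι] [DecidableEq ι] {S : Finset ι}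
    {a i : ι} (ha : a ∉ S) (hi : i ∈ S) (n : ι → ℕ) (hna : n a ≤ 1) (hni : n i ≤ 1)
    (hS : ∀ j ∈ S, n j ≤ 2) (hrest : ∀ j ∈ (insert a S)ᶜ, n j ≤ 3) :
    ∏ j, n j ≤ 2 ^ (#S - 1) * 3 ^ (Fintype.card ι - 1 - #S) := by
  calc ∏ j, n j = n a * (n i * ∏ j ∈ S.erase i, n j) * ∏ j ∈ (insert a S)ᶜ, n j := by
        rw [mul_prod_erase S n hi, ← prod_insert ha, prod_mul_prod_compl]
    _ ≤ 1 * (1 * 2 ^ #(S.erase i)) * 3 ^ #(insert a S)ᶜ := by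
        gcongr
        · exact prod_le_pow_card _ _ _ fun j hj => hS j (mem_of_mem_erase hj)
        · exact prod_le_pow_card _ _ _ hrest
    _ = 2 ^ (#S - 1) * 3 ^ (Fintype.card ι - 1 - #S) := by
        rw [card_erase_of_mem hi, card_compl, card_insert_of_notMem ha, one_mul, one_mul,
          Nat.sub_sub, add_comm 1]

lemma prod_card_neighborCodeRange_le {ι : Type*} [Fintype ι] [DecidableEq ι] (c : ι → ℕ)
    {a i : ι} {S : Finset ι} (ha : a ∉ S) (hi : i ∈ S) :
    ∏ j, #(neighborCodeRange c a i S j) ≤ 2 ^ (#S - 1) * 3 ^ (Fintype.card ι - 1 - #S) := by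
  have hai : a ≠ i := fun h => ha (h ▸ hi)
  refine prod_le_two_pow_mul_three_pow ha hi _ ?_ ?_ (fun j hj => ?_) (fun j hj => ?_)
  · simp [neighborCodeRange, hai]
  · simp [neighborCodeRange]
  · unfold neighborCodeRange
    split_ifs <;> simp
  · obtain ⟨hja, hjS⟩ : j ≠ a ∧ j ∉ S := by simpa using hj
    have hji : j ≠ i := fun h => hjS (h ▸ hi)
    simp only [neighborCodeRange, hji, hja, hjS, if_false, Nat.card_Icc]
    omega

theorem neighbors_with_color_le_general {V : Type*} [Fintype V]
    (G : SimpleGraph V) [DecidableRel G.Adj] (hT : G.IsTree) (k : ℕ) (f : V → Fin k)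
    (hf : IsLocatingColoring G k f) (x : V)
    (p : ℕ) (hp : p = ((G.neighborFinset x).image f).card)
    (i : Fin k) (hi : ∃ y ∈ G.neighborFinset x, f y = i) :
    ((G.neighborFinset x).filter (fun y => f y = i)).card ≤ 2 ^ (p - 1) * 3 ^ (k - 1 - p) := by
  obtain ⟨y₀, hy₀, rfl⟩ := hi
  subst hp
  set S := (G.neighborFinset x).image f
  have hxS : f x ∉ S := fun h => by
    obtain ⟨z, hz, hfz⟩ := mem_image.mp h
    exact hf.1.2 x z ((G.mem_neighborFinset x z).mp hz) hfz.symm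
  have hmaps : Set.MapsTo (colorCode G f) ((G.neighborFinset x).filter (f · = f y₀))
      (Fintype.piFinset (neighborCodeRange (colorCode G f x) (f x) (f y₀) S)) := by
    intro y hy
    obtain ⟨hxy, hfy⟩ := mem_filter.mp hy
    rw [mem_coe, Fintype.mem_piFinset, ← hfy]
    exact colorCode_mem_neighborCodeRange hf.1.1 hT.1 ((G.mem_neighborFinset x y).mp hxy)
  calc _ ≤ _ := card_le_card_of_injOn _ hmaps hf.2.injOn
    _ = _ := Fintype.card_piFinset _
    _ ≤ _ := by
      simpa using prod_card_neighborCodeRange_le (colorCode G f x) hxS (mem_image_of_mem f hy₀)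

/-- In a finite tree with a locating `k`-coloring, if `p` is the number of distinct
colors appearing on the neighbors of a vertex `x`, then for every color `i` appearing
on a neighbor of `x`, the number of neighbors of `x` colored `i` is at most
`2^(p-1) * 3^(k-1-p)`. -/
theorem neighbors_with_color_le {V : Type*} [Fintype V] [DecidableEq V]
    (G : SimpleGraph V) [DecidableRel G.Adj] (hT : G.IsTree) (k : ℕ) (f : V → Fin k)
    (hf : IsLocatingColoring G k f) (x : V)
    (p : ℕ) (hp : p = ((G.neighborFinset x).image f).card)
    (i : Fin k) (hi : ∃ y ∈ G.neighborFinset x, f y = i) :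
    ((G.neighborFinset x).filter (fun y => f y = i)).card ≤ 2 ^ (p - 1) * 3 ^ (k - 1 - p) :=
  neighbors_with_color_le_general G hT k f hf x p hp i hi
end
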